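/- Let σ > 0 and β > 0, and define f : ℂ → ℂ by f(z) := (σ√(2π))^{−1/2}·e^{−z²/(4σ²)}. Then for every real t: |f(t + iβ/4) − f(t − iβ/4)| = 2·e^{β²/(64σ²)}·f(t)·|sin(βt/(8σ²))|, and consequently ( ∫_ℝ |f(t + iβ/4) − f(t − iβ/4)|² dt )^{1/2} ≤ (β/(4σ))·e^{β²/(64σ²)}. -/

import Mathlib

open Matrix MeasureTheory Filter
open scoped ComplexOrder

noncomputable section

/-- The space of `d × d` complex matrices. -/
abbrev Mat (d : ℕ) : Type := Matrix (Fin d) (Fin d) ℂ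

/-- The Gibbs state `ρ_β = exp(-βH)/Tr(exp(-βH))`. -/
def gibbs {d : ℕ} (H : Mat d) (β : ℝ) : Mat d :=
  (Matrix.trace (NormedSpace.exp ((-β : ℂ) • H)))⁻¹ • NormedSpace.exp ((-β : ℂ) • H)

/-- The power `ρ_β^s = exp(-sβH)/Tr(exp(-βH))^s`. -/
def gibbsPow {d : ℕ} (H : Mat d) (β s : ℝ) : Mat d :=
  ((Matrix.trace (NormedSpace.exp ((-β : ℂ) • H))) ^ (s : ℂ))⁻¹ •
    NormedSpace.exp ((-(s * β) : ℂ) • H)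

/-- The Hilbert–Schmidt inner product `⟨A,B⟩₂ = Tr(A† B)`. -/
def hsInner {d : ℕ} (A B : Mat d) : ℂ := Matrix.trace (Aᴴ * B)

/-- The KMS inner product `⟨A,B⟩_{ρ_β} = Tr(A† ρ_β^{1/2} B ρ_β^{1/2})`. -/
def kmsInner {d : ℕ} (H : Mat d) (β : ℝ) (A B : Mat d) : ℂ :=
  Matrix.trace (Aᴴ * gibbsPow H β (1/2) * B * gibbsPow H β (1/2))

/-- The trace norm `‖A‖₁ = Tr √(A†A)`. -/
def traceNorm {d : ℕ} (A : Mat d) : ℝ :=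
  ((open scoped MatrixOrder in CFC.sqrt (Aᴴ * A)).trace).re

/-- The operator (spectral) norm of a matrix. -/
def opNorm {d : ℕ} (A : Mat d) : ℝ :=
  ‖Matrix.toEuclideanCLM (𝕜 := ℂ) A‖

/-- The Frobenius / Hilbert–Schmidt norm `‖A‖₂ = √Tr(A†A)`. -/
def frobNorm {d : ℕ} (A : Mat d) : ℝ :=
  Real.sqrt ((Matrix.trace (Aᴴ * A)).re)

attribute [local instance] Matrix.frobeniusNormedAddCommGroup Matrix.frobeniusNormedSpace

/-- The exponential of a linear endomorphism of matrix space. -/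
def endExp {d : ℕ} (L : Mat d →ₗ[ℂ] Mat d) : Mat d →ₗ[ℂ] Mat d :=
  letI : UniformSpace (Mat d) :=
    (Matrix.frobeniusNormedAddCommGroup : NormedAddCommGroup (Mat d)).toUniformSpace
  letI : TopologicalSpace (Mat d) := UniformSpace.toTopologicalSpace
  (NormedSpace.exp (LinearMap.toContinuousLinearMap L)).toLinearMap

/-- The induced trace norm (1→1 norm) of a linear map on matrices. -/
def oneNorm {d : ℕ} (L : Mat d →ₗ[ℂ] Mat d) : ℝ :=
  ⨆ A : {A : Mat d // traceNorm A = 1}, traceNorm (L A.1)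

/-!
Completing the square, `exp(-(t ± i a)²/k) = exp(a²/k) · exp(-t²/k) · exp(∓ 2 i a t / k)`, so the
difference of the two shifted Gaussians is `-2 i exp(a²/k) exp(-t²/k) sin(2 a t / k)`. With
`|sin x| ≤ |x|` the squared norm of the difference is bounded by a multiple of `t² f(t)²`, whose
integral is the variance `σ²` of the normalized Gaussian.
-/

open Real

theorem integrable_sq_mul_exp_neg_mul_sq {b : ℝ} (hb : 0 < b) :
    Integrable fun x : ℝ => x ^ 2 * rexp (-b * x ^ 2) := by
  simpa [Real.rpow_two] using integrable_rpow_mul_exp_neg_mul_sq hb (s := 2) (by norm_num)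

theorem integral_sq_mul_exp_neg_mul_sq {b : ℝ} (hb : 0 < b) :
    ∫ x : ℝ, x ^ 2 * rexp (-b * x ^ 2) = √(π / b) / (2 * b) := by
  have hderiv : ∀ x : ℝ, HasDerivAt (fun x : ℝ => x * rexp (-b * x ^ 2))
      (rexp (-b * x ^ 2) - 2 * b * (x ^ 2 * rexp (-b * x ^ 2))) x := by
    intro x
    refine ((hasDerivAt_id' x).mul ((hasDerivAt_pow 2 x).const_mul (-b)).exp).congr_deriv ?_
    norm_num
    ring
  have hint := (integrable_sq_mul_exp_neg_mul_sq hb).const_mul (2 * b)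
  -- integration by parts: `x ↦ x exp(-b x²)` vanishes at `±∞`
  have hzero := integral_eq_zero_of_hasDerivAt_of_integrable hderiv
    ((integrable_exp_neg_mul_sq hb).sub hint) (integrable_mul_exp_neg_mul_sq hb)
  rw [integral_sub (integrable_exp_neg_mul_sq hb) hint, integral_const_mul, integral_gaussian,
    sub_eq_zero] at hzero
  rw [hzero, mul_div_cancel_left₀ _ (by positivity)]

open Complex in
theorem cexp_neg_sq_div_add_mul_I_sub (a k t : ℝ) :
    cexp (-(t + I * a) ^ 2 / k) - cexp (-(t - I * a) ^ 2 / k) =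
      -2 * I * (rexp (a ^ 2 / k) * rexp (-t ^ 2 / k) * Real.sin (2 * a * t / k) : ℝ) := by
  have hplus : -(t + I * a) ^ 2 / k =
      ((a ^ 2 / k : ℝ) : ℂ) + (-t ^ 2 / k : ℝ) + -(2 * a * t / k : ℝ) * I := by
    push_cast
    linear_combination (-a ^ 2 / k) * I_sq
  have hminus : -(t - I * a) ^ 2 / k =
      ((a ^ 2 / k : ℝ) : ℂ) + (-t ^ 2 / k : ℝ) + (2 * a * t / k : ℝ) * I := by
    push_cast
    linear_combination (-a ^ 2 / k) * I_sq
  have hsin := two_sin (2 * a * t / k : ℝ)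
  simp only [hplus, hminus, Complex.exp_add, ofReal_mul, ofReal_exp, ofReal_sin]
  set A := cexp (a ^ 2 / k : ℝ) * cexp (-t ^ 2 / k : ℝ)
  linear_combination (A * I) * hsin +
    (A * (cexp (-(2 * a * t / k : ℝ) * I) - cexp ((2 * a * t / k : ℝ) * I))) * I_sq

def gaussianEnvelope (σ : ℝ) (z : ℂ) : ℂ :=
  (((σ * √(2 * π)) ^ (-(1/2) : ℝ) : ℝ) : ℂ) * Complex.exp (-z ^ 2 / (4 * σ ^ 2))

theorem norm_gaussianEnvelope_ofReal (σ t : ℝ) :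
    ‖gaussianEnvelope σ t‖ = |(σ * √(2 * π)) ^ (-(1/2) : ℝ)| * rexp (-t ^ 2 / (4 * σ ^ 2)) := by
  rw [gaussianEnvelope, show -(t : ℂ) ^ 2 / (4 * σ ^ 2) = (-t ^ 2 / (4 * σ ^ 2) : ℝ) by push_cast; ring,
    ← Complex.ofReal_exp, ← Complex.ofReal_mul, Complex.norm_real, Real.norm_eq_abs, abs_mul,
    Real.abs_exp]

theorem norm_gaussianEnvelope_add_mul_I_sub (σ β t : ℝ) :
    ‖gaussianEnvelope σ (t + Complex.I * (β / 4)) - gaussianEnvelope σ (t - Complex.I * (β / 4))‖ =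
      2 * rexp (β ^ 2 / (64 * σ ^ 2)) * ‖gaussianEnvelope σ t‖ *
        |Real.sin (β * t / (8 * σ ^ 2))| := by
  rw [norm_gaussianEnvelope_ofReal, gaussianEnvelope, gaussianEnvelope, ← mul_sub,
    show (β : ℂ) / 4 = (β / 4 : ℝ) by push_cast; ring,
    show 4 * (σ : ℂ) ^ 2 = (4 * σ ^ 2 : ℝ) by push_cast; ring, cexp_neg_sq_div_add_mul_I_sub]
  simp only [norm_mul, norm_neg, Complex.norm_real, Complex.norm_I, Complex.norm_ofNat,
    Real.norm_eq_abs, Real.abs_exp]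
  rw [show (β / 4) ^ 2 / (4 * σ ^ 2) = β ^ 2 / (64 * σ ^ 2) by ring,
    show 2 * (β / 4) * t / (4 * σ ^ 2) = β * t / (8 * σ ^ 2) by ring]
  ring

theorem sq_norm_gaussianEnvelope_add_mul_I_sub_le (σ β t : ℝ) :
    ‖gaussianEnvelope σ (t + Complex.I * (β / 4)) - gaussianEnvelope σ (t - Complex.I * (β / 4))‖ ^ 2
      ≤ (β * rexp (β ^ 2 / (64 * σ ^ 2)) / (4 * σ ^ 2)) ^ 2 *
        (t ^ 2 * ‖gaussianEnvelope σ t‖ ^ 2) := by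
  rw [norm_gaussianEnvelope_add_mul_I_sub]
  calc (2 * rexp (β ^ 2 / (64 * σ ^ 2)) * ‖gaussianEnvelope σ t‖ *
        |Real.sin (β * t / (8 * σ ^ 2))|) ^ 2
      ≤ (2 * rexp (β ^ 2 / (64 * σ ^ 2)) * ‖gaussianEnvelope σ t‖ * |β * t / (8 * σ ^ 2)|) ^ 2 := by
        gcongr (_ * ?_) ^ 2
        exact Real.abs_sin_le_abs
    _ = _ := by
        rw [mul_pow _ |_|, sq_abs]
        ring

theorem sq_norm_gaussianEnvelope_ofReal {σ : ℝ} (hσ : 0 < σ) (t : ℝ) :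
    ‖gaussianEnvelope σ t‖ ^ 2 = (σ * √(2 * π))⁻¹ * rexp (-(1 / (2 * σ ^ 2)) * t ^ 2) := by
  have hconst : ((σ * √(2 * π)) ^ (-(1/2) : ℝ)) ^ 2 = (σ * √(2 * π))⁻¹ := by
    rw [← Real.rpow_natCast, ← Real.rpow_mul (by positivity)]
    norm_num [Real.rpow_neg_one]
  have hexp : rexp (-t ^ 2 / (4 * σ ^ 2)) ^ 2 = rexp (-(1 / (2 * σ ^ 2)) * t ^ 2) := by
    rw [← Real.exp_nat_mul]
    congr 1
    field_simp
    ring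
  rw [norm_gaussianEnvelope_ofReal, mul_pow, sq_abs, hconst, hexp]

theorem integrable_sq_mul_sq_norm_gaussianEnvelope {σ : ℝ} (hσ : 0 < σ) :
    Integrable fun t : ℝ => t ^ 2 * ‖gaussianEnvelope σ t‖ ^ 2 := by
  simp_rw [sq_norm_gaussianEnvelope_ofReal hσ, mul_left_comm _ (σ * √(2 * π))⁻¹]
  exact (integrable_sq_mul_exp_neg_mul_sq (by positivity)).const_mul _

theorem integral_sq_mul_sq_norm_gaussianEnvelope {σ : ℝ} (hσ : 0 < σ) :
    ∫ t : ℝ, t ^ 2 * ‖gaussianEnvelope σ t‖ ^ 2 = σ ^ 2 := by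
  simp_rw [sq_norm_gaussianEnvelope_ofReal hσ, mul_left_comm _ (σ * √(2 * π))⁻¹]
  rw [integral_const_mul, integral_sq_mul_exp_neg_mul_sq (by positivity),
    show π / (1 / (2 * σ ^ 2)) = σ ^ 2 * (2 * π) by field_simp,
    Real.sqrt_mul (sq_nonneg σ) (2 * π), Real.sqrt_sq hσ.le]
  field_simp

/-- imaginary-shift difference of the Gaussian envelope
`f(z) = (σ√(2π))^{-1/2} e^{-z²/(4σ²)}`: pointwise identity and `L²` bound. -/
theorem stmt_15 (σ β : ℝ) (hσ : 0 < σ) (hβ : 0 < β)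
    (f : ℂ → ℂ)
    (hf : ∀ z : ℂ, f z = (((σ * Real.sqrt (2 * Real.pi)) ^ (-(1/2) : ℝ) : ℝ) : ℂ) *
      Complex.exp (-z ^ 2 / (4 * σ ^ 2))) :
    (∀ t : ℝ,
      ‖f (t + Complex.I * (β / 4)) - f (t - Complex.I * (β / 4))‖ =
        2 * Real.exp (β ^ 2 / (64 * σ ^ 2)) * ‖f t‖ * |Real.sin (β * t / (8 * σ ^ 2))|) ∧
    Real.sqrt (∫ t : ℝ,
        ‖f (t + Complex.I * (β / 4)) - f (t - Complex.I * (β / 4))‖ ^ 2) ≤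
      β / (4 * σ) * Real.exp (β ^ 2 / (64 * σ ^ 2)) := by
  obtain rfl : f = gaussianEnvelope σ := funext hf
  refine ⟨norm_gaussianEnvelope_add_mul_I_sub σ β, ?_⟩
  set c := β * rexp (β ^ 2 / (64 * σ ^ 2)) / (4 * σ ^ 2) with hc
  have hmono := integral_mono_of_nonneg (ae_of_all _ fun t => by positivity)
    ((integrable_sq_mul_sq_norm_gaussianEnvelope hσ).const_mul (c ^ 2))
    (ae_of_all _ (sq_norm_gaussianEnvelope_add_mul_I_sub_le σ β))
  rw [integral_const_mul, integral_sq_mul_sq_norm_gaussianEnvelope hσ, ← mul_pow] at hmono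
  calc _ ≤ √((c * σ) ^ 2) := Real.sqrt_le_sqrt hmono
    _ = β / (4 * σ) * rexp (β ^ 2 / (64 * σ ^ 2)) := by
      rw [Real.sqrt_sq (by positivity), hc]
      field_simp

end
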